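/- For every n ∈ ℕ+, the group ℤ^n equipped with the metric d(x,y) = Σ_{i=1}^n |x_i − y_i| has the (1,0)-DTUT property. -/

import Mathlib

open Metric Set Function

namespace APC

variable {X Y : Type*}

/-- A family `𝒰` of subsets of a metric space is `r`-disjoint if any two distinct members
are at distance at least `r`. -/
def RDisjoint [MetricSpace X] (r : ℝ) (𝒰 : Set (Set X)) : Prop :=
  ∀ U ∈ 𝒰, ∀ V ∈ 𝒰, U ≠ V → ∀ x ∈ U, ∀ y ∈ V, r ≤ dist x y

/-- A family `𝒰` is `R`-bounded if every member has diameter at most `R`. -/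
def RBounded [MetricSpace X] (R : ℝ) (𝒰 : Set (Set X)) : Prop :=
  ∀ U ∈ 𝒰, ∀ x ∈ U, ∀ y ∈ U, dist x y ≤ R

/-- A family is uniformly bounded if it is `R`-bounded for some `R > 0`. -/
def UnifBounded [MetricSpace X] (𝒰 : Set (Set X)) : Prop :=
  ∃ R : ℝ, 0 < R ∧ RBounded R 𝒰

/-- `asdim X ≤ n`. -/
def AsdimLE (X : Type*) [MetricSpace X] (n : ℕ) : Prop :=
  ∀ r : ℝ, 0 < r → ∃ 𝒰 : Fin (n + 1) → Set (Set X),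
    (∀ i, UnifBounded (𝒰 i)) ∧ (∀ i, RDisjoint r (𝒰 i)) ∧ (⋃ i, ⋃₀ 𝒰 i) = Set.univ

/-- `X` has finite asymptotic dimension. -/
def HasFiniteAsdim (X : Type*) [MetricSpace X] : Prop := ∃ n : ℕ, AsdimLE X n

/-- Asymptotic property C. -/
def HasAPC (X : Type*) [MetricSpace X] : Prop :=
  ∀ R : ℕ → ℝ, (∀ i, 0 < R i) → StrictMono R →
    ∃ n : ℕ, ∃ 𝒰 : Fin (n + 1) → Set (Set X),
      (∀ i, UnifBounded (𝒰 i)) ∧ (∀ i : Fin (n + 1), RDisjoint (R i) (𝒰 i)) ∧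
      (⋃ i, ⋃₀ 𝒰 i) = Set.univ

/-- `M^a`, the derivative of a collection of finite nonempty subsets of `ℕ`. -/
def deriv (M : Set (Finset ℕ)) (a : ℕ) : Set (Finset ℕ) :=
  {τ | τ.Nonempty ∧ a ∉ τ ∧ insert a τ ∈ M}

/-- `OrdLE α M` means `Ord M ≤ α` in the sense of Radul: either `M = ∅`
(so that `Ord M = 0`), or `Ord M^a < α` for every `a : ℕ`.  Defined by
well-founded recursion on the ordinal `α`. -/
def OrdLE : Ordinal.{0} → Set (Finset ℕ) → Prop :=
  Ordinal.lt_wf.fix (C := fun _ => Set (Finset ℕ) → Prop)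
    (fun α IH M => M = ∅ ∨ ∀ a : ℕ, ∃ β : Ordinal.{0}, ∃ hβ : β < α, IH β hβ (deriv M a))

/-- The collection `A(X,d)` of finite nonempty subsets `σ ⊆ ℕ` such that there is no
covering of `X` by uniformly bounded families `𝒰ᵢ` (`i ∈ σ`), each `i`-disjoint. -/
def AClass (X : Type*) [MetricSpace X] : Set (Finset ℕ) :=
  {σ | σ.Nonempty ∧ ¬ ∃ 𝒰 : ℕ → Set (Set X),
      (∀ i ∈ σ, UnifBounded (𝒰 i)) ∧ (∀ i ∈ σ, RDisjoint (i : ℝ) (𝒰 i)) ∧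
      (⋃ i ∈ σ, ⋃₀ 𝒰 i) = Set.univ}

/-- `trasdim X ≤ α`. -/
def TrasdimLE (X : Type*) [MetricSpace X] (α : Ordinal.{0}) : Prop :=
  OrdLE α (AClass X)

/-- The `(m,n)`-DTUT property: disjointness of the `(m,n)`-tiling through uniform
translation. -/
def DTUT (X : Type*) [MetricSpace X] (m n : ℕ) : Prop :=
  ∃ F : Fin m → ℕ,
    ∀ h : ℕ+ → ℕ+, ∀ k : Fin (m + 1) → ℕ+, StrictMono k →
      ∃ C : (Fin m → ℕ+) → Fin (n + 1) → Set (Set X),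
      ∃ D : (Fin m → ℕ+) → (i : Fin m) → Fin (F i + 1) → Set (Set X),
        ∀ l : Fin m → ℕ+, (∀ r : Fin m, l r ≤ h (k r.succ)) →
          ((∀ j, UnifBounded (C l j)) ∧
           (∀ i s, UnifBounded (D l i s)) ∧
           (∀ j, RDisjoint ((k 0 : ℕ) : ℝ) (C l j)) ∧
           (∀ (i : Fin m) (s : Fin (F i + 1)), RDisjoint ((k i.succ : ℕ) : ℝ) (D l i s)) ∧
           ((⋃ j, ⋃₀ C l j) ∪ (⋃ i, ⋃ s, ⋃₀ D l i s) = Set.univ)) ∧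
          (∀ (i : Fin m) (s : Fin (F i + 1)),
            (∀ t : ℕ+, t ≤ h (k i.succ) →
              (⋃₀ D (Function.update l i t) i s).Nonempty) ∧
            (∀ t t' : ℕ+, t ≤ h (k i.succ) → t' ≤ h (k i.succ) → t ≠ t' →
              Disjoint (⋃₀ D (Function.update l i t) i s)
                (⋃₀ D (Function.update l i t') i s)) ∧
            RDisjoint ((k i.succ : ℕ) : ℝ)
              (⋃ t ∈ {t : ℕ+ | t ≤ h (k i.succ)}, D (Function.update l i t) i s))

/-- The word length of `g` with respect to the symmetrized generating set `S ∪ S⁻¹`. -/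
noncomputable def wordLength {G : Type*} [Group G] (S : Set G) (g : G) : ℕ :=
  sInf {n : ℕ | ∃ L : List G, (∀ x ∈ L, x ∈ S ∨ x⁻¹ ∈ S) ∧ L.prod = g ∧ L.length = n}

/-- A group is FC if every conjugacy class is finite. -/
def IsFCGroup (G : Type*) [Group G] : Prop :=
  ∀ x : G, Set.Finite {y : G | ∃ g : G, g * x * g⁻¹ = y}

/-- A metric on a countable discrete space is proper if every ball is finite. -/
def ProperMet (X : Type*) [MetricSpace X] : Prop :=
  ∀ (x : X) (R : ℝ), (Metric.closedBall x R).Finite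

/-- Left invariance of a metric on a group. -/
def LeftInvariant (G : Type*) [Group G] [MetricSpace G] : Prop :=
  ∀ g x y : G, dist (g * x) (g * y) = dist x y

/-- Bornologous maps. -/
def Bornologous [MetricSpace X] [MetricSpace Y] (f : X → Y) : Prop :=
  ∀ R : ℝ, 0 < R → ∃ P : ℝ, 0 < P ∧ ∀ x y : X, dist x y < R → dist (f x) (f y) < P

/-- Coarse embeddings. -/
def CoarseEmbedding [MetricSpace X] [MetricSpace Y] (f : X → Y) : Prop :=
  ∃ ρminus ρplus : ℝ → ℝ, Monotone ρminus ∧ Monotone ρplus ∧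
    Filter.Tendsto ρminus Filter.atTop Filter.atTop ∧
    (∀ x y : X, ρminus (dist x y) ≤ dist (f x) (f y) ∧ dist (f x) (f y) ≤ ρplus (dist x y))

/-- Coarse equivalences: coarse embeddings with coarsely dense image. -/
def CoarseEquiv [MetricSpace X] [MetricSpace Y] (f : X → Y) : Prop :=
  CoarseEmbedding f ∧ ∃ C : ℝ, 0 < C ∧ ∀ y : Y, ∃ x : X, dist y (f x) ≤ C

end APC

open APC Set

/-! Put `K = k₁` and `P = h(k₁) + 1`. For a translation parameter `t`, cut `ℤ` into the blocks
`[2K(t + Pq), 2K(t + P(q + 1)))`, each a short tile of length `K` followed by a long tile.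
The cells of `ℤⁿ` are the products of tiles; those made of long tiles only form `𝒞₀`, and for
each nonempty set of coordinates the cells that are short exactly there form one family `𝒟ₛ`.
Two distinct cells of the same kind differ in some block index, so they are `K`-apart. Moving
`t` inside `[1, P)` moves every short tile by a nonzero multiple of `2K` modulo the period `2KP`,
so short tiles belonging to different translation parameters are `K`-apart as well. -/

namespace APC

variable {X : Type*} [MetricSpace X]

theorem RDisjoint.mono {r r' : ℝ} {𝒰 : Set (Set X)} (h : RDisjoint r' 𝒰) (hr : r ≤ r') :
    RDisjoint r 𝒰 :=
  fun U hU V hV hUV x hx y hy => hr.trans (h U hU V hV hUV x hx y hy)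

theorem UnifBounded.of_rBounded {R : ℝ} {𝒰 : Set (Set X)} (h : RBounded R 𝒰) :
    UnifBounded 𝒰 :=
  ⟨max R 1, by positivity, fun U hU x hx y hy => (h U hU x hx y hy).trans (le_max_left _ _)⟩

end APC

theorem Fintype.exists_surjective_fin_card_sub_one_add_one (α : Type*) [Fintype α]
    [Nonempty α] : ∃ f : Fin (Fintype.card α - 1 + 1) → α, Function.Surjective f := by
  rw [Nat.sub_add_cancel Fintype.card_pos]
  exact ⟨_, (Fintype.equivFin α).symm.surjective⟩

namespace IntTiling

/-- The short (`true`) or long (`false`) tile of block `q` for the translation parameter `t`. -/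
def tile (K P t q : ℤ) : Bool → Set ℤ
  | true => Ico (2 * K * (t + P * q)) (2 * K * (t + P * q) + K)
  | false => Ico (2 * K * (t + P * q) + K) (2 * K * (t + P * (q + 1)))

variable {K P : ℤ}

theorem exists_mem_tile (hK : 0 < K) (hP : 0 < P) (t z : ℤ) : ∃ b q, z ∈ tile K P t q b := by
  have hB : 0 < 2 * K * P := by positivity
  have hdiv := Int.mul_ediv_add_emod (z - 2 * K * t) (2 * K * P)
  have hr₀ := Int.emod_nonneg (z - 2 * K * t) hB.ne'
  have hr₁ := Int.emod_lt_of_pos (z - 2 * K * t) hB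
  by_cases hr : (z - 2 * K * t) % (2 * K * P) < K
  · exact ⟨true, (z - 2 * K * t) / (2 * K * P), by
      simp only [tile, mem_Ico]; constructor <;> linarith⟩
  · exact ⟨false, (z - 2 * K * t) / (2 * K * P), by
      simp only [tile, mem_Ico]; constructor <;> linarith⟩

theorem tile_nonempty (hK : 0 < K) (hP : 0 < P) (t q : ℤ) (b : Bool) :
    (tile K P t q b).Nonempty := by
  cases b
  · exact ⟨2 * K * (t + P * q) + K, by simp only [tile, mem_Ico]; constructor <;> nlinarith⟩
  · exact ⟨2 * K * (t + P * q), by simp only [tile, mem_Ico]; constructor <;> linarith⟩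

theorem abs_sub_le_of_mem_tile (hK : 0 ≤ K) (hP : 0 < P) {t q z w : ℤ} {b : Bool}
    (hz : z ∈ tile K P t q b) (hw : w ∈ tile K P t q b) : |z - w| ≤ 2 * K * P := by
  cases b <;> simp only [tile, mem_Ico] at hz hw <;> rw [abs_le] <;> constructor <;> nlinarith

theorem le_abs_sub_of_mem_tile_of_ne (hK : 0 ≤ K) (hP : 0 < P) {t q q' z w : ℤ} {b : Bool}
    (hq : q ≠ q') (hz : z ∈ tile K P t q b) (hw : w ∈ tile K P t q' b) : K ≤ |z - w| := by
  rw [le_abs]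
  rcases hq.lt_or_gt with hlt | hlt
  · have hgap : 2 * K * P * (q + 1) ≤ 2 * K * P * q' := by gcongr; omega
    cases b <;> simp only [tile, mem_Ico] at hz hw <;> right <;> nlinarith
  · have hgap : 2 * K * P * (q' + 1) ≤ 2 * K * P * q := by gcongr; omega
    cases b <;> simp only [tile, mem_Ico] at hz hw <;> left <;> nlinarith

theorem le_abs_sub_of_mem_tile_true_of_ne (hK : 0 ≤ K) {t t' q q' z w : ℤ}
    (ht : t ∈ Ico 0 P) (ht' : t' ∈ Ico 0 P) (htt : t ≠ t')
    (hz : z ∈ tile K P t q true) (hw : w ∈ tile K P t' q' true) : K ≤ |z - w| := by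
  have hm : t + P * q ≠ t' + P * q' := fun h => htt <| by
    simpa [Int.add_mul_emod_self_left, Int.emod_eq_of_lt ht.1 ht.2,
      Int.emod_eq_of_lt ht'.1 ht'.2] using congrArg (· % P) h
  simp only [tile, mem_Ico] at hz hw
  rw [le_abs]
  rcases hm.lt_or_gt with hlt | hlt
  · have hgap : 2 * K * (t + P * q + 1) ≤ 2 * K * (t' + P * q') :=
      mul_le_mul_of_nonneg_left hlt (by positivity)
    right; linarith
  · have hgap : 2 * K * (t' + P * q' + 1) ≤ 2 * K * (t + P * q) :=
      mul_le_mul_of_nonneg_left hlt (by positivity)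
    left; linarith

variable {n : ℕ}

def cell (K P t : ℤ) (σ : Fin n → Bool) (j : Fin n → ℤ) : Set (Fin n → ℤ) :=
  {x | ∀ i, x i ∈ tile K P t (j i) (σ i)}

def cells (K P t : ℤ) (σ : Fin n → Bool) : Set (Set (Fin n → ℤ)) :=
  range (cell K P t σ)

def CoordSeparated (K : ℤ) (𝒰 : Set (Set (Fin n → ℤ))) : Prop :=
  ∀ U ∈ 𝒰, ∀ V ∈ 𝒰, U ≠ V → ∀ x ∈ U, ∀ y ∈ V, ∃ i, K ≤ |x i - y i|

theorem mem_sUnion_cells_false_or_exists (hK : 0 < K) (hP : 0 < P) (t : ℤ) (x : Fin n → ℤ) :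
    x ∈ ⋃₀ cells K P t (fun _ => false) ∨ ∃ σ : {σ : Fin n → Bool // ∃ i, σ i},
      x ∈ ⋃₀ cells K P t σ.1 := by
  choose σ j hx using fun i => exists_mem_tile hK hP t (x i)
  by_cases hσ : ∃ i, σ i
  · exact Or.inr ⟨⟨σ, hσ⟩, cell K P t σ j, mem_range_self j, hx⟩
  · obtain rfl : σ = fun _ => false := funext fun i => by simpa using not_exists.mp hσ i
    exact Or.inl ⟨cell K P t _ j, mem_range_self j, hx⟩

theorem sUnion_cells_nonempty (hK : 0 < K) (hP : 0 < P) (t : ℤ) (σ : Fin n → Bool) :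
    (⋃₀ cells K P t σ).Nonempty := by
  choose x hx using fun i => tile_nonempty hK hP t 0 (σ i)
  exact ⟨x, cell K P t σ 0, mem_range_self 0, hx⟩

theorem abs_sub_le_of_mem_cells (hK : 0 ≤ K) (hP : 0 < P) {t : ℤ} {σ : Fin n → Bool}
    {U : Set (Fin n → ℤ)} (hU : U ∈ cells K P t σ) {x y : Fin n → ℤ} (hx : x ∈ U) (hy : y ∈ U)
    (i : Fin n) : |x i - y i| ≤ 2 * K * P := by
  obtain ⟨j, rfl⟩ := hU
  exact abs_sub_le_of_mem_tile hK hP (hx i) (hy i)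

theorem exists_le_abs_sub_of_mem_cell_of_ne (hK : 0 ≤ K) (hP : 0 < P) {t : ℤ}
    {σ : Fin n → Bool} {j j' x y : Fin n → ℤ} (hj : j ≠ j')
    (hx : x ∈ cell K P t σ j) (hy : y ∈ cell K P t σ j') : ∃ i, K ≤ |x i - y i| :=
  have ⟨i, hi⟩ := Function.ne_iff.mp hj
  ⟨i, le_abs_sub_of_mem_tile_of_ne hK hP hi (hx i) (hy i)⟩

theorem exists_le_abs_sub_of_mem_cell_of_ne_shift (hK : 0 ≤ K) {t t' : ℤ}
    (ht : t ∈ Ico 0 P) (ht' : t' ∈ Ico 0 P) (htt : t ≠ t') {σ : Fin n → Bool} (hσ : ∃ i, σ i)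
    {j j' x y : Fin n → ℤ} (hx : x ∈ cell K P t σ j) (hy : y ∈ cell K P t' σ j') :
    ∃ i, K ≤ |x i - y i| :=
  have ⟨i, hi⟩ := hσ
  ⟨i, le_abs_sub_of_mem_tile_true_of_ne hK ht ht' htt (hi ▸ hx i) (hi ▸ hy i)⟩

theorem coordSeparated_cells (hK : 0 ≤ K) (hP : 0 < P) (t : ℤ) (σ : Fin n → Bool) :
    CoordSeparated K (cells K P t σ) := by
  rintro _ ⟨j, rfl⟩ _ ⟨j', rfl⟩ hne x hx y hy
  exact exists_le_abs_sub_of_mem_cell_of_ne hK hP (fun h => hne (congrArg _ h)) hx hy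

theorem coordSeparated_biUnion_cells (hK : 0 ≤ K) (hP : 0 < P) {ι : Type*} {s : Set ι}
    {τ : ι → ℤ} (hτ : ∀ a ∈ s, τ a ∈ Ico 0 P) {σ : Fin n → Bool} (hσ : ∃ i, σ i) :
    CoordSeparated K (⋃ a ∈ s, cells K P (τ a) σ) := by
  simp only [CoordSeparated, mem_iUnion₂]
  rintro _ ⟨a, ha, j, rfl⟩ _ ⟨a', ha', j', rfl⟩ hne x hx y hy
  by_cases hτa : τ a = τ a'
  · rw [hτa] at hx hne
    exact exists_le_abs_sub_of_mem_cell_of_ne hK hP (fun h => hne (congrArg _ h)) hx hy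
  · exact exists_le_abs_sub_of_mem_cell_of_ne_shift hK (hτ a ha) (hτ a' ha') hτa hσ hx hy

theorem disjoint_sUnion_cells (hK : 0 < K) {t t' : ℤ} (ht : t ∈ Ico 0 P) (ht' : t' ∈ Ico 0 P)
    (htt : t ≠ t') {σ : Fin n → Bool} (hσ : ∃ i, σ i) :
    Disjoint (⋃₀ cells K P t σ) (⋃₀ cells K P t' σ) := by
  rw [Set.disjoint_left]
  rintro x ⟨_, ⟨j, rfl⟩, hx⟩ ⟨_, ⟨j', rfl⟩, hx'⟩
  obtain ⟨i, hi⟩ := exists_le_abs_sub_of_mem_cell_of_ne_shift hK.le ht ht' htt hσ hx hx'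
  simp only [sub_self, abs_zero] at hi
  exact hK.not_ge hi

section L1Metric

variable [d : MetricSpace (Fin n → ℤ)]

theorem CoordSeparated.rDisjoint
    (hdist : ∀ x y : Fin n → ℤ,
      @dist _ d.toPseudoMetricSpace.toDist x y = ∑ i, |((x i : ℝ) - (y i : ℝ))|)
    {𝒰 : Set (Set (Fin n → ℤ))} (h : CoordSeparated K 𝒰) : RDisjoint K 𝒰 := by
  intro U hU V hV hUV x hx y hy
  obtain ⟨i, hi⟩ := h U hU V hV hUV x hx y hy
  rw [hdist]
  calc (K : ℝ) ≤ |((x i : ℝ) - (y i : ℝ))| := by exact_mod_cast hi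
    _ ≤ _ := Finset.single_le_sum (f := fun i => |((x i : ℝ) - (y i : ℝ))|)
        (fun i _ => abs_nonneg _) (Finset.mem_univ i)

theorem unifBounded_of_abs_sub_le
    (hdist : ∀ x y : Fin n → ℤ,
      @dist _ d.toPseudoMetricSpace.toDist x y = ∑ i, |((x i : ℝ) - (y i : ℝ))|)
    {𝒰 : Set (Set (Fin n → ℤ))} {R : ℤ} (h : ∀ U ∈ 𝒰, ∀ x ∈ U, ∀ y ∈ U, ∀ i, |x i - y i| ≤ R) :
    UnifBounded 𝒰 := by
  refine UnifBounded.of_rBounded (R := n * R) fun U hU x hx y hy => ?_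
  rw [hdist]
  calc _ ≤ ∑ _i : Fin n, (R : ℝ) :=
        Finset.sum_le_sum fun i _ => by exact_mod_cast h U hU x hx y hy i
    _ = n * R := by simp

theorem unifBounded_cells
    (hdist : ∀ x y : Fin n → ℤ,
      @dist _ d.toPseudoMetricSpace.toDist x y = ∑ i, |((x i : ℝ) - (y i : ℝ))|)
    (hK : 0 ≤ K) (hP : 0 < P) (t : ℤ) (σ : Fin n → Bool) : UnifBounded (cells K P t σ) :=
  unifBounded_of_abs_sub_le hdist fun _ hU _ hx _ hy => abs_sub_le_of_mem_cells hK hP hU hx hy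

theorem rDisjoint_cells
    (hdist : ∀ x y : Fin n → ℤ,
      @dist _ d.toPseudoMetricSpace.toDist x y = ∑ i, |((x i : ℝ) - (y i : ℝ))|)
    (hK : 0 ≤ K) (hP : 0 < P) (t : ℤ) (σ : Fin n → Bool) : RDisjoint K (cells K P t σ) :=
  (coordSeparated_cells hK hP t σ).rDisjoint hdist

end L1Metric

end IntTiling

open IntTiling in
/-- For every `n ≥ 1`, the group `ℤⁿ` with the `ℓ¹` metric
`d(x,y) = Σ |xᵢ - yᵢ|` has the `(1,0)`-DTUT property. -/
theorem zn_dtut (n : ℕ) (hn : 0 < n) (dZ : MetricSpace (Fin n → ℤ))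
    (hdist : ∀ x y : Fin n → ℤ,
      @dist _ dZ.toPseudoMetricSpace.toDist x y = ∑ i, |((x i : ℝ) - (y i : ℝ))|) :
    @DTUT (Fin n → ℤ) dZ 1 0 := by
  have : Nonempty {σ : Fin n → Bool // ∃ i, σ i} := ⟨⟨fun _ => true, ⟨0, hn⟩, rfl⟩⟩
  obtain ⟨f, hf⟩ :=
    Fintype.exists_surjective_fin_card_sub_one_add_one {σ : Fin n → Bool // ∃ i, σ i}
  refine ⟨fun _ => Fintype.card {σ : Fin n → Bool // ∃ i, σ i} - 1, fun h k hk => ?_⟩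
  have hk₀ : ((k 0 : ℕ) : ℝ) ≤ ((k 1 : ℕ) : ℤ) := by
    exact_mod_cast (hk (by decide : (0 : Fin 2) < 1)).le
  set K : ℤ := ((k 1 : ℕ) : ℤ)
  set P : ℤ := ((h (k 1) : ℕ) : ℤ) + 1
  have hK : 0 < K := by positivity
  have hP : 0 < P := by omega
  have hrange (t : ℕ+) (ht : t ≤ h (k 1)) : ((t : ℕ) : ℤ) ∈ Ico 0 P :=
    ⟨by positivity, by simp only [P]; exact_mod_cast Nat.lt_succ_of_le ht⟩
  refine ⟨fun l _ => cells K P (l 0 : ℕ) fun _ => false,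
    fun l i s => cells K P (l i : ℕ) (f s).1, fun l _ => ⟨⟨?_, ?_, ?_, ?_, ?_⟩, fun i s => ?_⟩⟩
  · exact fun _ => unifBounded_cells hdist hK.le hP _ _
  · exact fun _ _ => unifBounded_cells hdist hK.le hP _ _
  · exact fun _ => (rDisjoint_cells hdist hK.le hP _ _).mono hk₀
  · intro i _
    obtain rfl := Fin.fin_one_eq_zero i
    exact rDisjoint_cells hdist hK.le hP _ _
  · refine eq_univ_of_forall fun x => ?_
    rcases mem_sUnion_cells_false_or_exists hK hP (l 0 : ℕ) x with hx | ⟨σ, hx⟩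
    · exact Or.inl (mem_iUnion.mpr ⟨0, hx⟩)
    · obtain ⟨s, rfl⟩ := hf σ
      exact Or.inr (mem_iUnion₂.mpr ⟨0, s, hx⟩)
  · obtain rfl := Fin.fin_one_eq_zero i
    simp only [update_self]
    exact ⟨fun t _ => sUnion_cells_nonempty hK hP _ _,
      fun t t' ht ht' htt => disjoint_sUnion_cells hK (hrange t ht) (hrange t' ht')
        (by exact_mod_cast PNat.coe_injective.ne htt) (f s).2,
      (coordSeparated_biUnion_cells hK.le hP hrange (f s).2).rDisjoint hdist⟩
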